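/- arXiv:1607.00686 — 6 statements merged into one kernel-verified Lean document; each statement's English description precedes it below -/
import Mathlib

section
/- Let G be a graph in which C_4, the complement of C_4, C_5, the chair, and the co-chair are all forbidden as induced subgraphs. If mbb'm' is an induced path P_4 in G, then N(m) \ {b} = N(m') \ {b'}. -/
open SimpleGraph

universe u

/-- `H` is forbidden as an induced subgraph of `G`: no induced subgraph of `G`
is isomorphic to `H`. -/
def ForbiddenIn {W : Type*} {V : Type*} (H : SimpleGraph W) (G : SimpleGraph V) : Prop :=
  ¬ ∃ f : W ↪ V, ∀ u v, G.Adj (f u) (f v) ↔ H.Adj u v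

/-- The chair: vertices `0,1,2,3,4` with exactly the edges `01, 12, 23, 24`. -/
def chair : SimpleGraph (Fin 5) :=
  SimpleGraph.fromRel (fun a b =>
    (a = 0 ∧ b = 1) ∨ (a = 1 ∧ b = 2) ∨ (a = 2 ∧ b = 3) ∨ (a = 2 ∧ b = 4))

/-- `C₄`, `C₄`'s complement, `C₅`, the chair and the co-chair are all forbidden in `G`. -/
def FiveForbidden {V : Type*} (G : SimpleGraph V) : Prop :=
  ForbiddenIn (cycleGraph 4) G ∧ ForbiddenIn (cycleGraph 4)ᶜ G ∧
  ForbiddenIn (cycleGraph 5) G ∧ ForbiddenIn chair G ∧ ForbiddenIn chairᶜ G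

/-- `G` is an `{S, K}`-split graph: `V(G)` is the disjoint union of the stable set `S`
and the clique `K`. -/
def IsSplitPartition {V : Type*} (G : SimpleGraph V) (S K : Set V) : Prop :=
  (∀ v, v ∈ S ∨ v ∈ K) ∧ Disjoint S K ∧
  (∀ a ∈ S, ∀ b ∈ S, ¬ G.Adj a b) ∧
  (∀ a ∈ K, ∀ b ∈ K, a ≠ b → G.Adj a b)

/-- `a b b' a'` is an induced path `P₄` in `G`: the four vertices are distinct and the
only edges among them are `ab`, `bb'`, `b'a'`. -/
def IsInducedP4 {V : Type*} (G : SimpleGraph V) (a b b' a' : V) : Prop :=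
  a ≠ b ∧ a ≠ b' ∧ a ≠ a' ∧ b ≠ b' ∧ b ≠ a' ∧ b' ≠ a' ∧
  G.Adj a b ∧ G.Adj b b' ∧ G.Adj b' a' ∧
  ¬ G.Adj a b' ∧ ¬ G.Adj a a' ∧ ¬ G.Adj b a'

/-- `G` is an `{S, K}`-threshold graph, following the paper's Definition 2.
Here `X i` stands for `X_{i+1}` (real indices `1,…,n+1`) and `A i` stands for `A_i`
(real indices `0,…,n`), so the condition `1 ≤ j ≤ i ≤ n` on real indices becomes
`(j : ℕ) < (i : ℕ)` on the `Fin (n+1)` indices. -/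
def IsSKThreshold {V : Type*} (G : SimpleGraph V) (S K : Set V) : Prop :=
  ∃ (n : ℕ) (X A : Fin (n + 1) → Set V),
    (∀ i j, i ≠ j → Disjoint (X i) (X j)) ∧
    (∀ i j, i ≠ j → Disjoint (A i) (A j)) ∧
    (∀ i j, Disjoint (X i) (A j)) ∧
    K = ⋃ i, X i ∧
    S = ⋃ i, A i ∧
    (∀ v, v ∈ S ∨ v ∈ K) ∧
    (∀ i : Fin (n + 1), (i : ℕ) < n → (X i).Nonempty) ∧
    (∀ i : Fin (n + 1), 0 < (i : ℕ) → (A i).Nonempty) ∧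
    (∀ u v, G.Adj u v ↔
      (u ∈ K ∧ v ∈ K ∧ u ≠ v) ∨
      (∃ i j : Fin (n + 1), (j : ℕ) < (i : ℕ) ∧
        ((u ∈ A i ∧ v ∈ X j) ∨ (v ∈ A i ∧ u ∈ X j))))

/-- The allowed cross (stable-to-clique) edges of a comb.  Indexing conventions:
`A i = A_i` (`0,…,n`), `X i = X_{i+1}` (`1,…,n+1`), `M k = M_{k+1}` (`1,…,l`),
`Y k = Y_{k+1}` (`1,…,l+2`).  `s` is the stable-side endpoint, `x` the clique-side one. -/
def CombCross {V : Type*} (n l k0 : ℕ) (A X : Fin (n + 1) → Set V)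
    (M : Fin l → Set V) (Y : Fin (l + 2) → Set V) (s x : V) : Prop :=
  (∃ i j : Fin (n + 1), (j : ℕ) < (i : ℕ) ∧ s ∈ A i ∧ x ∈ X j) ∨
  ((∃ i, s ∈ A i) ∧ (∃ j, x ∈ Y j)) ∨
  (∃ k : Fin l, s ∈ M k ∧ x ∈ Y ⟨(k : ℕ), by omega⟩) ∨
  (∃ (k1 : Fin l) (k2 : Fin (l + 2)), (k1 : ℕ) < (k2 : ℕ) ∧ (k2 : ℕ) < l ∧
    s ∈ M k1 ∧ x ∈ Y k2) ∨
  (∃ k : Fin l, (k : ℕ) + 1 ≤ k0 ∧ s ∈ M k ∧ x ∈ Y ⟨l, by omega⟩)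

/-- `G` is an `{S, K}`-comb, following the paper's Definition 3.
Indexing conventions as in `CombCross`; in particular `Y 0 = X 0` encodes `Y_1 = X_1`,
`Y ⟨l,_⟩` is `Y_{l+1}` and `Y ⟨l+1,_⟩` is `Y_{l+2}`. -/
def IsSKComb {V : Type*} (G : SimpleGraph V) (S K : Set V) : Prop :=
  ∃ (n l : ℕ) (A X : Fin (n + 1) → Set V) (M : Fin l → Set V)
    (Y : Fin (l + 2) → Set V) (k0 : ℕ),
    -- (1) the sets of the comb, `Y_1 = X_1`, pairwise disjointness of the sets
    Y 0 = X 0 ∧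
    (∀ i j, i ≠ j → Disjoint (A i) (A j)) ∧
    (∀ i j, i ≠ j → Disjoint (X i) (X j)) ∧
    (∀ i j, i ≠ j → Disjoint (M i) (M j)) ∧
    (∀ i j, i ≠ j → Disjoint (Y i) (Y j)) ∧
    (∀ i j, Disjoint (A i) (X j)) ∧
    (∀ i j, Disjoint (A i) (M j)) ∧
    (∀ i j, Disjoint (A i) (Y j)) ∧
    (∀ i j, Disjoint (M i) (X j)) ∧
    (∀ i j, Disjoint (M i) (Y j)) ∧
    (∀ (i : Fin (n + 1)) (j : Fin (l + 2)), 0 < (j : ℕ) → Disjoint (X i) (Y j)) ∧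
    -- (2) `S = A ∪ M` is stable and (3) `K = X ∪ Y` is a clique, and they partition `V(G)`
    S = (⋃ i, A i) ∪ (⋃ k, M k) ∧
    K = (⋃ i, X i) ∪ (⋃ k, Y k) ∧
    (∀ v, v ∈ S ∨ v ∈ K) ∧
    Disjoint S K ∧
    (∀ a ∈ S, ∀ b ∈ S, ¬ G.Adj a b) ∧
    (∀ a ∈ K, ∀ b ∈ K, a ≠ b → G.Adj a b) ∧
    -- (4) for `1 ≤ j ≤ i ≤ n`, `G[A_i ∪ X_j]` is a complete split graph
    (∀ i j : Fin (n + 1), (j : ℕ) < (i : ℕ) → ∀ a ∈ A i, ∀ x ∈ X j, G.Adj a x) ∧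
    -- (5) `G[A ∪ Y]` is a complete split graph
    (∀ i, ∀ a ∈ A i, ∀ j, ∀ y ∈ Y j, G.Adj a y) ∧
    -- (6) for `1 ≤ i ≤ l`, `G[Y_i ∪ M_i]` is a perfect split graph
    (∀ k : Fin l,
      (∀ y ∈ Y ⟨(k : ℕ), by omega⟩, ∃! m, m ∈ M k ∧ G.Adj y m) ∧
      (∀ m ∈ M k, ∃! y, y ∈ Y ⟨(k : ℕ), by omega⟩ ∧ G.Adj y m)) ∧
    -- (7) for `1 ≤ i < j ≤ l`, `G[Y_j ∪ M_i]` is a complete split graph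
    (∀ (k1 : Fin l) (k2 : Fin (l + 2)), (k1 : ℕ) < (k2 : ℕ) → (k2 : ℕ) < l →
      ∀ m ∈ M k1, ∀ y ∈ Y k2, G.Adj m y) ∧
    -- (8) `∃ 1 ≤ k0 ≤ l` such that for all `i ≤ k0`, `G[Y_{l+1} ∪ M_i]` is complete split
    (1 ≤ k0 ∧ k0 ≤ l ∧
      ∀ k : Fin l, (k : ℕ) + 1 ≤ k0 → ∀ m ∈ M k, ∀ y ∈ Y ⟨l, by omega⟩, G.Adj m y) ∧
    -- (9) only `X_{n+1}`, `Y_{l+2}`, `Y_{l+1}`, `M_l`, `A_0` may be empty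
    (∀ i : Fin (n + 1), (i : ℕ) < n → (X i).Nonempty) ∧
    (∀ i : Fin (n + 1), 0 < (i : ℕ) → (A i).Nonempty) ∧
    (∀ k : Fin l, (k : ℕ) + 1 < l → (M k).Nonempty) ∧
    (∀ k : Fin (l + 2), 0 < (k : ℕ) → (k : ℕ) < l → (Y k).Nonempty) ∧
    -- (10) these are the only edges of `G`
    (∀ u v, G.Adj u v → (u ∈ K ∧ v ∈ K) ∨
      CombCross n l k0 A X M Y u v ∨ CombCross n l k0 A X M Y v u)

/-- `G` is a comb. -/
def IsComb {V : Type*} (G : SimpleGraph V) : Prop :=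
  ∃ S K : Set V, IsSKComb G S K

/-! If `v` is a neighbour of `m` other than `b` but not a neighbour of `m'`, then according to
its adjacencies to `b'` and `b` either `m v` and `b' m'` induce `2K₂ = C₄ᶜ` (`v ≁ b'`), or `m v b' b`
is an induced `C₄` (`v ∼ b'`, `v ≁ b`), or `b', m, m', b, v` induce a co-chair (`v` adjacent to
both). Reversing the path gives the other inclusion. -/

section

variable {V : Type*} {G : SimpleGraph V}

theorem ForbiddenIn.false_of_adj_iff {n : ℕ} {H : SimpleGraph (Fin n)} (h : ForbiddenIn H G)
    (f : Fin n → V) (hf : ∀ i j, i < j → f i ≠ f j)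
    (hadj : ∀ i j, i < j → (G.Adj (f i) (f j) ↔ H.Adj i j)) : False := by
  refine h ⟨⟨f, fun i j hij => ?_⟩, fun i j => ?_⟩
  · by_contra hne
    rcases lt_or_gt_of_ne hne with hlt | hlt
    · exact hf i j hlt hij
    · exact hf j i hlt hij.symm
  · rcases lt_trichotomy i j with hlt | rfl | hlt
    · exact hadj i j hlt
    · simp
    · rw [G.adj_comm, H.adj_comm]; exact hadj j i hlt

instance : DecidableRel chair.Adj := fun a b => by
  rw [chair, fromRel_adj]; infer_instance

variable {a b c d e : V}

theorem ForbiddenIn.false_of_cycle4 (h : ForbiddenIn (cycleGraph 4) G) (hac : a ≠ c) (hbd : b ≠ d)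
    (hab : G.Adj a b) (hbc : G.Adj b c) (hcd : G.Adj c d) (had : G.Adj a d)
    (nac : ¬ G.Adj a c) (nbd : ¬ G.Adj b d) : False := by
  refine h.false_of_adj_iff ![a, b, c, d] (fun i j hij => ?_)
    (fun i j hij => ?_) <;> fin_cases i <;> fin_cases j <;> try exact absurd hij (by decide)
  all_goals first
    | exact iff_of_true (by simp_all) (by decide)
    | exact iff_of_false (by simp_all) (by decide)
    | (intro hfij; simp_all [G.adj_comm])

theorem ForbiddenIn.false_of_compl_cycle4 (h : ForbiddenIn (cycleGraph 4)ᶜ G)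
    (hac : G.Adj a c) (hbd : G.Adj b d)
    (nab : ¬ G.Adj a b) (nbc : ¬ G.Adj b c) (ncd : ¬ G.Adj c d) (nad : ¬ G.Adj a d) : False := by
  refine h.false_of_adj_iff ![a, b, c, d] (fun i j hij => ?_)
    (fun i j hij => ?_) <;> fin_cases i <;> fin_cases j <;> try exact absurd hij (by decide)
  all_goals first
    | exact iff_of_true (by simp_all) (by decide)
    | exact iff_of_false (by simp_all) (by decide)
    | (intro hfij; simp_all [G.adj_comm])

theorem ForbiddenIn.false_of_compl_chair (h : ForbiddenIn chairᶜ G)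
    (hac : G.Adj a c) (had : G.Adj a d) (hae : G.Adj a e) (hbd : G.Adj b d) (hbe : G.Adj b e)
    (hde : G.Adj d e) (nab : ¬ G.Adj a b) (nbc : ¬ G.Adj b c) (ncd : ¬ G.Adj c d)
    (nce : ¬ G.Adj c e) : False := by
  refine h.false_of_adj_iff ![a, b, c, d, e] (fun i j hij => ?_)
    (fun i j hij => ?_) <;> fin_cases i <;> fin_cases j <;> try exact absurd hij (by decide)
  all_goals first
    | exact iff_of_true (by simp_all) (by decide)
    | exact iff_of_false (by simp_all) (by decide)
    | (intro hfij; simp_all [G.adj_comm])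

namespace IsInducedP4

variable {m b b' m' : V}

theorem reverse (hP : IsInducedP4 G m b b' m') : IsInducedP4 G m' b' b m := by
  obtain ⟨hmb, hmb', hmm', hbb', hbm', hb'm', amb, abb', ab'm', nmb', nmm', nbm'⟩ := hP
  exact ⟨hb'm'.symm, hbm'.symm, hmm'.symm, hbb'.symm, hmb'.symm, hmb.symm, ab'm'.symm, abb'.symm,
    amb.symm, fun h => nbm' h.symm, fun h => nmm' h.symm, fun h => nmb' h.symm⟩

theorem adj_of_adj (hC4 : ForbiddenIn (cycleGraph 4) G) (h2K2 : ForbiddenIn (cycleGraph 4)ᶜ G)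
    (hcochair : ForbiddenIn chairᶜ G) (hP : IsInducedP4 G m b b' m') {v : V}
    (hmv : G.Adj m v) (hvb : v ≠ b) : G.Adj m' v := by
  obtain ⟨-, hmb', -, -, -, -, amb, abb', ab'm', nmb', nmm', nbm'⟩ := hP
  by_contra nm'v
  by_cases hvb' : G.Adj v b'
  · by_cases hvb2 : G.Adj v b
    · exact hcochair.false_of_compl_chair ab'm' abb'.symm hvb'.symm amb hmv hvb2.symm
        (fun h => nmb' h.symm) nmm' (fun h => nbm' h.symm) nm'v
    · exact hC4.false_of_cycle4 hmb' hvb hmv hvb' abb'.symm amb nmb' hvb2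
  · exact h2K2.false_of_compl_cycle4 hmv ab'm' nmb' (fun h => hvb' h.symm) (fun h => nm'v h.symm) nmm'

theorem neighborSet_sdiff_subset (hC4 : ForbiddenIn (cycleGraph 4) G)
    (h2K2 : ForbiddenIn (cycleGraph 4)ᶜ G) (hcochair : ForbiddenIn chairᶜ G)
    (hP : IsInducedP4 G m b b' m') : G.neighborSet m \ {b} ⊆ G.neighborSet m' \ {b'} := by
  rintro v ⟨hmv, hvb⟩
  refine ⟨hP.adj_of_adj hC4 h2K2 hcochair hmv hvb, ?_⟩
  obtain ⟨-, -, -, -, -, -, -, -, -, nmb', -, -⟩ := hP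
  rintro rfl
  exact nmb' hmv

end IsInducedP4

end

theorem stmt_1_general {V : Type u} (G : SimpleGraph V)
    (hforb : FiveForbidden G) (m b b' m' : V)
    (hP : IsInducedP4 G m b b' m') :
    G.neighborSet m \ {b} = G.neighborSet m' \ {b'} := by
  obtain ⟨hC4, h2K2, -, -, hcochair⟩ := hforb
  exact (hP.neighborSet_sdiff_subset hC4 h2K2 hcochair).antisymm
    (hP.reverse.neighborSet_sdiff_subset hC4 h2K2 hcochair)

theorem stmt_1 {V : Type u} [Fintype V] (G : SimpleGraph V)
    (hforb : FiveForbidden G) (m b b' m' : V)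
    (hP : IsInducedP4 G m b b' m') :
    G.neighborSet m \ {b} = G.neighborSet m' \ {b'} :=
  stmt_1_general G hforb m b b' m' hP
end

section
/- Let G be an {S,K}-split graph in which the co-chair is forbidden as an induced subgraph, and suppose mbb'm' is an induced path P_4 in G with m,m' in S and b,b' in K. Then every vertex x adjacent to m with x ≠ b and x ≠ b' is also adjacent to m'. -/
open SimpleGraph

universe u

theorem stmt_3 {V : Type u} [Fintype V] (G : SimpleGraph V) (S K : Set V)
    (hsplit : IsSplitPartition G S K) (hcochair : ForbiddenIn chairᶜ G)
    (m b b' m' : V) (hP : IsInducedP4 G m b b' m')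
    (hm : m ∈ S) (hm' : m' ∈ S) (hb : b ∈ K) (hb' : b' ∈ K)
    (x : V) (hxb : x ≠ b) (hxb' : x ≠ b') (hadj : G.Adj m x) :
    G.Adj m' x := by
  obtain ⟨hall, hdisj, hstab, hcliq⟩ := hsplit
  obtain ⟨h1, h2, h3, h4, h5, h6, e1, e2, e3, n1, n2, n3⟩ := hP
  -- x is in K
  have hxK : x ∈ K := by
    rcases hall x with hx | hx
    · exact absurd hadj (hstab m hm x hx)
    · exact hx
  have hxm : x ≠ m := fun h => (hdisj.le_bot ⟨h ▸ hm, hxK⟩)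
  have hxm' : x ≠ m' := fun h => (hdisj.le_bot ⟨h ▸ hm', hxK⟩)
  have hmm' : ¬ G.Adj m m' := hstab m hm m' hm'
  have exb : G.Adj x b := hcliq x hxK b hb hxb
  have exb' : G.Adj x b' := hcliq x hxK b' hb' hxb'
  by_contra hne
  apply hcochair
  have hinj : Function.Injective (![b', m, m', x, b] : Fin 5 → V) := by
    intro u v
    fin_cases u <;> fin_cases v <;> simp_all <;> first
      | rfl
      | (intro h; first
          | exact h2 h.symm | exact h2 h | exact h3 h.symm | exact h3 h
          | exact h4 h.symm | exact h4 h | exact h5 h.symm | exact h5 h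
          | exact h6 h.symm | exact h6 h | exact h1 h.symm | exact h1 h
          | exact hxm h.symm | exact hxm h | exact hxm' h.symm | exact hxm' h
          | exact hxb h.symm | exact hxb h | exact hxb' h.symm | exact hxb' h)
  refine ⟨⟨![b', m, m', x, b], hinj⟩, ?_⟩
  intro u v
  have gsymm := G.symm
  fin_cases u <;> fin_cases v <;>
    simp_all [chair, compl_adj, SimpleGraph.fromRel_adj, G.adj_comm] <;>
    first
      | exact e1 | exact e2 | exact e3 | exact e1.symm | exact e2.symm | exact e3.symm
      | exact exb | exact exb' | exact exb.symm | exact exb'.symm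
      | exact hadj | exact hadj.symm
      | exact n1 | exact n2 | exact n3 | exact hmm'
      | (intro h; first
          | exact n1 h.symm | exact n2 h.symm | exact n3 h.symm
          | exact hmm' h.symm | exact hne h | exact hne h.symm)
end

section
/- A graph G is a split graph if and only if C_4, the complement of C_4, and C_5 are forbidden as induced subgraphs of G. -/
open SimpleGraph

universe u

/-!
A split graph contains none of the three graphs: every edge has an end in the clique and every
non-edge an end in the stable set, and no placement of the vertices of `C₄`, `2K₂` or `C₅`
satisfies both.

Conversely, let `K` be a clique maximizing `∑ v ∈ K, (deg v + 1)`; every vertex outside `K` has a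
non-neighbour in `K`, as `K` cannot be enlarged. If two adjacent vertices `x ~ y` lay outside `K`,
forbidding `C₄` and `2K₂` would give `z ∈ K` adjacent to neither of them, with, say, `x` adjacent
to all of `K \ {z}`. Forbidding `C₄`, `2K₂` and `C₅` then forces `N(z) ⊊ N(x)` (witnessed by
`y`), so exchanging `z` for `x` would make `K` heavier.
-/

namespace SimpleGraph

variable {V : Type*} {G : SimpleGraph V}

theorem forbiddenIn_cycleGraph_four_iff :
    ForbiddenIn (cycleGraph 4) G ↔ ∀ a b c d, a ≠ c → b ≠ d →
      G.Adj a b → G.Adj b c → G.Adj c d → G.Adj d a → G.Adj a c ∨ G.Adj b d := by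
  refine ⟨fun hF a b c d hac hbd hab hbc hcd hda => ?_, fun h ⟨f, hf⟩ => ?_⟩
  · by_contra! ⟨hac', hbd'⟩
    have hinj : Function.Injective ![a, b, c, d] := by
      simp [Function.Injective, Fin.forall_fin_succ, hab.ne, hac, hda.ne', hbc.ne, hbd, hcd.ne,
        hab.ne', hac.symm, hda.ne, hbc.ne', hbd.symm, hcd.ne']
    refine hF ⟨⟨![a, b, c, d], hinj⟩, fun i j => ?_⟩
    fin_cases i <;> fin_cases j <;> simp +decide [hab, hbc, hcd, hda, hab.symm, hbc.symm, hcd.symm,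
      hda.symm, hac', hbd', G.adj_comm c a, G.adj_comm d b]
  · rcases h (f 0) (f 1) (f 2) (f 3) (f.injective.ne (by decide)) (f.injective.ne (by decide))
      ((hf 0 1).2 (by decide)) ((hf 1 2).2 (by decide)) ((hf 2 3).2 (by decide))
      ((hf 3 0).2 (by decide)) with h | h <;> exact absurd ((hf _ _).1 h) (by decide)

theorem forbiddenIn_compl_cycleGraph_four_iff :
    ForbiddenIn (cycleGraph 4)ᶜ G ↔ ∀ a b c d, a ≠ c → a ≠ d → b ≠ c → b ≠ d →
      G.Adj a b → G.Adj c d → G.Adj a c ∨ G.Adj a d ∨ G.Adj b c ∨ G.Adj b d := by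
  refine ⟨fun hF a b c d hac had hbc hbd hab hcd => ?_, fun h ⟨f, hf⟩ => ?_⟩
  · by_contra! ⟨hac', had', hbc', hbd'⟩
    have hinj : Function.Injective ![a, c, b, d] := by
      simp [Function.Injective, Fin.forall_fin_succ, hab.ne, hac, had, hbc, hbd, hcd.ne,
        hab.ne', hac.symm, had.symm, hbc.symm, hbd.symm, hcd.ne']
    refine hF ⟨⟨![a, c, b, d], hinj⟩, fun i j => ?_⟩
    fin_cases i <;> fin_cases j <;> simp +decide [hab, hcd, hab.symm, hcd.symm, hac', had', hbc',
      hbd', G.adj_comm c a, G.adj_comm d a, G.adj_comm c b, G.adj_comm d b]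
  · rcases h (f 0) (f 2) (f 1) (f 3) (f.injective.ne (by decide)) (f.injective.ne (by decide))
      (f.injective.ne (by decide)) (f.injective.ne (by decide))
      ((hf 0 2).2 (by decide)) ((hf 1 3).2 (by decide)) with h | h | h | h <;>
      exact absurd ((hf _ _).1 h) (by decide)

theorem forbiddenIn_cycleGraph_five_iff :
    ForbiddenIn (cycleGraph 5) G ↔ ∀ a b c d e, a ≠ c → a ≠ d → b ≠ d → b ≠ e → c ≠ e →
      G.Adj a b → G.Adj b c → G.Adj c d → G.Adj d e → G.Adj e a →
      G.Adj a c ∨ G.Adj a d ∨ G.Adj b d ∨ G.Adj b e ∨ G.Adj c e := by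
  refine ⟨fun hF a b c d e hac had hbd hbe hce hab hbc hcd hde hea => ?_, fun h ⟨f, hf⟩ => ?_⟩
  · by_contra! ⟨hac', had', hbd', hbe', hce'⟩
    have hinj : Function.Injective ![a, b, c, d, e] := by
      simp [Function.Injective, Fin.forall_fin_succ, hab.ne, hac, had, hea.ne', hbc.ne, hbd, hbe,
        hcd.ne, hce, hde.ne, hab.ne', hac.symm, had.symm, hea.ne, hbc.ne', hbd.symm, hbe.symm,
        hcd.ne', hce.symm, hde.ne']
    refine hF ⟨⟨![a, b, c, d, e], hinj⟩, fun i j => ?_⟩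
    fin_cases i <;> fin_cases j <;> simp +decide [hab, hbc, hcd, hde, hea, hab.symm, hbc.symm,
      hcd.symm, hde.symm, hea.symm, hac', had', hbd', hbe', hce', G.adj_comm c a, G.adj_comm d a,
      G.adj_comm d b, G.adj_comm e b, G.adj_comm e c]
  · rcases h (f 0) (f 1) (f 2) (f 3) (f 4) (f.injective.ne (by decide))
      (f.injective.ne (by decide)) (f.injective.ne (by decide)) (f.injective.ne (by decide))
      (f.injective.ne (by decide)) ((hf 0 1).2 (by decide)) ((hf 1 2).2 (by decide))
      ((hf 2 3).2 (by decide)) ((hf 3 4).2 (by decide)) ((hf 4 0).2 (by decide))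
      with h | h | h | h | h <;> exact absurd ((hf _ _).1 h) (by decide)

end SimpleGraph

namespace IsSplitPartition

variable {V : Type*} {G : SimpleGraph V} {S K : Set V}

theorem mem_clique_of_adj (h : IsSplitPartition G S K) {u v : V} (hu : u ∈ S)
    (huv : G.Adj u v) : v ∈ K :=
  (h.1 v).resolve_left fun hv => h.2.2.1 u hu v hv huv

theorem mem_clique_or_mem_clique (h : IsSplitPartition G S K) {u v : V} (huv : G.Adj u v) :
    u ∈ K ∨ v ∈ K :=
  (h.1 u).symm.imp_right fun hu => h.mem_clique_of_adj hu huv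

theorem adj_of_mem_clique (h : IsSplitPartition G S K) {u v : V} (hu : u ∈ K) (hv : v ∈ K)
    (huv : u ≠ v) : G.Adj u v :=
  h.2.2.2 u hu v hv huv

theorem forbiddenIn_cycleGraph_four (h : IsSplitPartition G S K) :
    ForbiddenIn (cycleGraph 4) G := by
  refine forbiddenIn_cycleGraph_four_iff.2 fun a b c d hac hbd hab hbc hcd hda => ?_
  rcases h.1 a with ha | ha
  · exact .inr (h.adj_of_mem_clique (h.mem_clique_of_adj ha hab)
      (h.mem_clique_of_adj ha hda.symm) hbd)
  rcases h.1 c with hc | hc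
  · exact .inr (h.adj_of_mem_clique (h.mem_clique_of_adj hc hbc.symm)
      (h.mem_clique_of_adj hc hcd) hbd)
  · exact .inl (h.adj_of_mem_clique ha hc hac)

theorem forbiddenIn_compl_cycleGraph_four (h : IsSplitPartition G S K) :
    ForbiddenIn (cycleGraph 4)ᶜ G := by
  refine forbiddenIn_compl_cycleGraph_four_iff.2 fun a b c d hac had hbc hbd hab hcd => ?_
  rcases h.mem_clique_or_mem_clique hab with ha | hb <;>
    rcases h.mem_clique_or_mem_clique hcd with hc | hd
  · exact .inl (h.adj_of_mem_clique ha hc hac)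
  · exact .inr (.inl (h.adj_of_mem_clique ha hd had))
  · exact .inr (.inr (.inl (h.adj_of_mem_clique hb hc hbc)))
  · exact .inr (.inr (.inr (h.adj_of_mem_clique hb hd hbd)))

theorem forbiddenIn_cycleGraph_five (h : IsSplitPartition G S K) :
    ForbiddenIn (cycleGraph 5) G := by
  refine forbiddenIn_cycleGraph_five_iff.2
    fun a b c d e hac _ hbd hbe _ hab hbc hcd _ hea => ?_
  rcases h.1 a with ha | ha
  · exact .inr (.inr (.inr (.inl (h.adj_of_mem_clique (h.mem_clique_of_adj ha hab)
      (h.mem_clique_of_adj ha hea.symm) hbe))))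
  rcases h.1 c with hc | hc
  · exact .inr (.inr (.inl (h.adj_of_mem_clique (h.mem_clique_of_adj hc hbc.symm)
      (h.mem_clique_of_adj hc hcd) hbd)))
  · exact .inl (h.adj_of_mem_clique ha hc hac)

end IsSplitPartition

namespace SimpleGraph.IsClique

variable {V : Type*} {G : SimpleGraph V} {K : Set V} {x y z : V}

theorem not_adj_or_not_adj (hC4 : ForbiddenIn (cycleGraph 4) G) (hK : G.IsClique K)
    (hx : x ∉ K) (hy : y ∉ K) (hxy : G.Adj x y) {p q : V} (hp : p ∈ K) (hq : q ∈ K)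
    (hxp : ¬G.Adj x p) (hyq : ¬G.Adj y q) : ¬G.Adj y p ∨ ¬G.Adj x q := by
  by_contra! ⟨hyp, hxq⟩
  have hpq : p ≠ q := G.ne_of_adj_of_not_adj hxq.symm (fun h => hxp h.symm) |>.symm
  rcases forbiddenIn_cycleGraph_four_iff.1 hC4 x y p q (ne_of_mem_of_not_mem hp hx).symm
    (ne_of_mem_of_not_mem hq hy).symm hxy hyp (hK hp hq hpq) hxq.symm with h | h
  exacts [hxp h, hyq h]

theorem forall_adj_or_forall_adj (hC4 : ForbiddenIn (cycleGraph 4) G)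
    (hC4c : ForbiddenIn (cycleGraph 4)ᶜ G) (hK : G.IsClique K) (hx : x ∉ K) (hy : y ∉ K)
    (hxy : G.Adj x y) (hz : z ∈ K) (hxz : ¬G.Adj x z) (hyz : ¬G.Adj y z) :
    (∀ c ∈ K, c ≠ z → G.Adj x c) ∨ (∀ c ∈ K, c ≠ z → G.Adj y c) := by
  have two_nonadj : ∀ p ∈ K, p ≠ z → ¬G.Adj x p → ¬G.Adj y p → False := fun p hp hpz hxp hyp => by
    rcases forbiddenIn_compl_cycleGraph_four_iff.1 hC4c x y z p (ne_of_mem_of_not_mem hz hx).symm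
      (ne_of_mem_of_not_mem hp hx).symm (ne_of_mem_of_not_mem hz hy).symm
      (ne_of_mem_of_not_mem hp hy).symm hxy (hK hz hp hpz.symm) with h | h | h | h
    exacts [hxz h, hxp h, hyz h, hyp h]
  by_contra! ⟨⟨p, hp, hpz, hxp⟩, ⟨q, hq, hqz, hyq⟩⟩
  rcases hK.not_adj_or_not_adj hC4 hx hy hxy hp hq hxp hyq with hyp | hxq
  exacts [two_nonadj p hp hpz hxp hyp, two_nonadj q hq hqz hxq hyq]

theorem neighborSet_ssubset (hC4 : ForbiddenIn (cycleGraph 4) G)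
    (hC4c : ForbiddenIn (cycleGraph 4)ᶜ G) (hC5 : ForbiddenIn (cycleGraph 5) G)
    (hK : G.IsClique K) (hout : ∀ w ∉ K, ∃ t ∈ K, ¬G.Adj w t) (hxy : G.Adj x y) (hz : z ∈ K)
    (hxz : ¬G.Adj x z) (hyz : ¬G.Adj y z) (hxK : ∀ c ∈ K, c ≠ z → G.Adj x c) :
    G.neighborSet z ⊂ G.neighborSet x := by
  have hxz' : x ≠ z := by rintro rfl; exact hyz hxy.symm
  have hyz' : y ≠ z := by rintro rfl; exact hxz hxy
  refine (Set.ssubset_iff_of_subset fun w (hzw : G.Adj z w) => show G.Adj x w from ?_).2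
    ⟨y, hxy, fun h : G.Adj z y => hyz h.symm⟩
  by_cases hw : w ∈ K
  · exact hxK w hw hzw.ne'
  by_contra hxw
  have hxw' : x ≠ w := by rintro rfl; exact hxz hzw.symm
  obtain ⟨t, ht, hwt⟩ := hout w hw
  by_cases hyw : G.Adj y w
  · have htz : t ≠ z := by rintro rfl; exact hwt hzw.symm
    have hzt : G.Adj z t := hK hz ht htz.symm
    have hyt : ¬G.Adj y t := fun hyt => by
      rcases forbiddenIn_cycleGraph_four_iff.1 hC4 y w z t hyz' (ne_of_mem_of_not_mem ht hw).symm
        hyw hzw.symm hzt hyt.symm with h | h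
      exacts [hyz h, hwt h]
    -- `x y w z t` is a chordless 5-cycle
    rcases forbiddenIn_cycleGraph_five_iff.1 hC5 x y w z t hxw' hxz' hyz'
      (G.ne_of_adj_of_not_adj hyw fun h => hwt h.symm) (ne_of_mem_of_not_mem ht hw).symm
      hxy hyw hzw.symm hzt (hxK t ht htz).symm with h | h | h | h | h
    exacts [hxw h, hxz h, hyz h, hyt h, hwt h]
  · -- the edges `xy` and `zw` induce a `2K₂`
    rcases forbiddenIn_compl_cycleGraph_four_iff.1 hC4c x y z w hxz' hxw' hyz'
      (G.ne_of_adj_of_not_adj hzw.symm hyz).symm hxy hzw with h | h | h | h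
    exacts [hxz h, hxw h, hyz h, hyw h]

end SimpleGraph.IsClique

namespace SimpleGraph

theorem degree_lt_degree_of_neighborSet_ssubset {V : Type*} {G : SimpleGraph V} {u v : V}
    [Fintype (G.neighborSet u)] [Fintype (G.neighborSet v)]
    (h : G.neighborSet u ⊂ G.neighborSet v) : G.degree u < G.degree v := by
  rw [← card_neighborFinset_eq_degree, ← card_neighborFinset_eq_degree]
  exact Finset.card_lt_card (by rwa [← Finset.coe_ssubset, coe_neighborFinset, coe_neighborFinset])

section DegreeWeight

variable {V : Type*} [Fintype V] (G : SimpleGraph V) [DecidableRel G.Adj]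

-- The `+ 1` makes every proper enlargement of a clique strictly heavier.
def degreeWeight (K : Finset V) : ℕ := ∑ v ∈ K, (G.degree v + 1)

theorem exists_isClique_forall_degreeWeight_le :
    ∃ K : Finset V, G.IsClique (K : Set V) ∧
      ∀ K' : Finset V, G.IsClique (K' : Set V) → G.degreeWeight K' ≤ G.degreeWeight K := by
  classical
  obtain ⟨K, hK, hmax⟩ := Finset.exists_max_image
    (Finset.univ.filter fun K : Finset V => G.IsClique (K : Set V)) G.degreeWeight
    ⟨∅, by simp⟩
  exact ⟨K, (Finset.mem_filter.1 hK).2, fun K' hK' => hmax K' (by simpa using hK')⟩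

variable {G} [DecidableEq V] {K : Finset V} {x z : V}

theorem exists_not_adj_of_forall_degreeWeight_le (hK : G.IsClique (K : Set V))
    (hmax : ∀ K' : Finset V, G.IsClique (K' : Set V) → G.degreeWeight K' ≤ G.degreeWeight K)
    (hx : x ∉ K) : ∃ z ∈ K, ¬G.Adj x z := by
  by_contra! hxK
  have hle := hmax (insert x K) <| by
    rw [Finset.coe_insert, isClique_insert]
    exact ⟨hK, fun c hc _ => hxK c hc⟩
  rw [degreeWeight, degreeWeight, Finset.sum_insert hx] at hle
  omega

theorem degree_le_degree_of_forall_degreeWeight_le (hK : G.IsClique (K : Set V))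
    (hmax : ∀ K' : Finset V, G.IsClique (K' : Set V) → G.degreeWeight K' ≤ G.degreeWeight K)
    (hx : x ∉ K) (hz : z ∈ K) (hxK : ∀ c ∈ K, c ≠ z → G.Adj x c) :
    G.degree x ≤ G.degree z := by
  have hle := hmax (insert x (K.erase z)) <| by
    rw [Finset.coe_insert, Finset.coe_erase, isClique_insert]
    exact ⟨hK.subset Set.sdiff_subset, fun c hc _ => hxK c hc.1 hc.2⟩
  rw [degreeWeight, degreeWeight, Finset.sum_insert (fun h => hx (Finset.mem_of_mem_erase h)),
    ← Finset.add_sum_erase K _ hz] at hle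
  omega

end DegreeWeight

end SimpleGraph

theorem exists_isSplitPartition_of_forbiddenIn {V : Type*} [Finite V] {G : SimpleGraph V}
    (hC4 : ForbiddenIn (cycleGraph 4) G) (hC4c : ForbiddenIn (cycleGraph 4)ᶜ G)
    (hC5 : ForbiddenIn (cycleGraph 5) G) : ∃ S K : Set V, IsSplitPartition G S K := by
  classical
  have := Fintype.ofFinite V
  obtain ⟨K, hK, hmax⟩ := G.exists_isClique_forall_degreeWeight_le
  have hout : ∀ w ∉ (K : Set V), ∃ t ∈ (K : Set V), ¬G.Adj w t := fun w hw =>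
    exists_not_adj_of_forall_degreeWeight_le hK hmax hw
  have no_swap : ∀ x y z, x ∉ K → G.Adj x y → z ∈ K → ¬G.Adj x z → ¬G.Adj y z →
      (∀ c ∈ (K : Set V), c ≠ z → G.Adj x c) → False := fun x y z hx hxy hz hxz hyz hxK =>
    (degree_le_degree_of_forall_degreeWeight_le hK hmax hx hz hxK).not_gt
      (degree_lt_degree_of_neighborSet_ssubset
        (hK.neighborSet_ssubset hC4 hC4c hC5 hout hxy hz hxz hyz hxK))
  refine ⟨(K : Set V)ᶜ, K, fun v => (em (v ∈ (K : Set V))).symm, disjoint_compl_left,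
    fun x hx y hy hxy => ?_, fun a ha b hb => hK ha hb⟩
  obtain ⟨p, hp, hxp⟩ := hout x hx
  obtain ⟨q, hq, hyq⟩ := hout y hy
  obtain ⟨z, hz, hxz, hyz⟩ : ∃ z ∈ (K : Set V), ¬G.Adj x z ∧ ¬G.Adj y z := by
    rcases hK.not_adj_or_not_adj hC4 hx hy hxy hp hq hxp hyq with hyp | hxq
    exacts [⟨p, hp, hxp, hyp⟩, ⟨q, hq, hxq, hyq⟩]
  rcases hK.forall_adj_or_forall_adj hC4 hC4c hx hy hxy hz hxz hyz with hxK | hyK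
  exacts [no_swap x y z hx hxy hz hxz hyz hxK, no_swap y x z hy hxy.symm hz hyz hxz hyK]

/-- Földes–Hammer. -/
theorem stmt_4 {V : Type u} [Fintype V] (G : SimpleGraph V) :
    (∃ S K : Set V, IsSplitPartition G S K) ↔
      ForbiddenIn (cycleGraph 4) G ∧ ForbiddenIn (cycleGraph 4)ᶜ G ∧
        ForbiddenIn (cycleGraph 5) G :=
  ⟨fun ⟨_, _, h⟩ => ⟨h.forbiddenIn_cycleGraph_four, h.forbiddenIn_compl_cycleGraph_four,
      h.forbiddenIn_cycleGraph_five⟩,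
    fun ⟨hC4, hC4c, hC5⟩ => exists_isSplitPartition_of_forbiddenIn hC4 hC4c hC5⟩
end

section
/- A graph G is a threshold graph if and only if C_4, the complement of C_4, and P_4 are forbidden as induced subgraphs of G. -/
open SimpleGraph

universe u

/-!
The pattern common to `C₄`, its complement and `P₄` is an alternating 4-cycle: edges `ua`, `vb`
and non-edges `ub`, `va`; the three graphs are its three completions on the pairs `uv`, `ab`.
A threshold graph has weights `w` and a threshold `t` with `u ~ v ↔ t < w u + w v`, and adding up
the four (non-)adjacencies of an alternating 4-cycle gives a contradiction.

Conversely, without alternating 4-cycles any two neighbourhoods are nested up to the two vertices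
themselves. Hence if `u` has minimum degree, every neighbour of `u` is adjacent to all other
vertices, so the graph has an isolated or a dominating vertex. Deleting it and inducting, the
threshold structure is rebuilt by putting an isolated vertex in `A₀` and a dominating one in `X₁`,
shifting all levels up by one when `A₀` is nonempty.
-/

namespace SimpleGraph

open Finset

variable {V W : Type*} {G : SimpleGraph V}

def IsAltFourCycle (G : SimpleGraph V) (u a v b : V) : Prop :=
  G.Adj u a ∧ G.Adj v b ∧ u ≠ b ∧ ¬ G.Adj u b ∧ v ≠ a ∧ ¬ G.Adj v a

def AltFourCycleFree (G : SimpleGraph V) : Prop :=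
  ∀ u a v b, ¬ G.IsAltFourCycle u a v b

theorem AltFourCycleFree.forbiddenIn {H : SimpleGraph W} (hG : G.AltFourCycleFree)
    (hH : ¬ H.AltFourCycleFree) : ForbiddenIn H G := by
  rintro ⟨f, hf⟩
  refine hH fun u a v b hH => hG (f u) (f a) (f v) (f b) ?_
  simpa only [IsAltFourCycle, hf, ne_eq, f.injective.eq_iff] using hH

theorem not_forbiddenIn_of_adj_iff {H : SimpleGraph W} {f : W → V} (hf : f.Injective)
    (h : ∀ u v, G.Adj (f u) (f v) ↔ H.Adj u v) : ¬ ForbiddenIn H G :=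
  fun hF => hF ⟨⟨f, hf⟩, h⟩

theorem altFourCycleFree_of_forbiddenIn (hC : ForbiddenIn (cycleGraph 4) G)
    (hCc : ForbiddenIn (cycleGraph 4)ᶜ G) (hP : ForbiddenIn (pathGraph 4) G) :
    G.AltFourCycleFree := by
  rintro u a v b ⟨hua, hvb, hub, hub', hva, hva'⟩
  have huv : u ≠ v := by rintro rfl; exact hva' hua
  have hab : a ≠ b := by rintro rfl; exact hva' hvb
  have hau := hua.ne
  have hvb' := hvb.ne
  by_cases huv' : G.Adj u v <;> by_cases hab' : G.Adj a b
  · refine not_forbiddenIn_of_adj_iff (f := ![u, a, b, v]) ?_ (fun i j => ?_) hC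
    · simp [Function.Injective, Fin.forall_fin_succ, *, Ne.symm]
    · fin_cases i <;> fin_cases j <;> simp_all +decide [G.adj_comm]
  · refine not_forbiddenIn_of_adj_iff (f := ![a, u, v, b]) ?_ (fun i j => ?_) hP
    · simp [Function.Injective, Fin.forall_fin_succ, *, Ne.symm]
    · fin_cases i <;> fin_cases j <;> simp_all [pathGraph_adj, G.adj_comm]
  · refine not_forbiddenIn_of_adj_iff (f := ![u, a, b, v]) ?_ (fun i j => ?_) hP
    · simp [Function.Injective, Fin.forall_fin_succ, *, Ne.symm]
    · fin_cases i <;> fin_cases j <;> simp_all [pathGraph_adj, G.adj_comm]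
  · refine not_forbiddenIn_of_adj_iff (f := ![u, v, a, b]) ?_ (fun i j => ?_) hCc
    · simp [Function.Injective, Fin.forall_fin_succ, *, Ne.symm]
    · fin_cases i <;> fin_cases j <;> simp_all +decide [G.adj_comm]

theorem altFourCycleFree_iff_forbiddenIn :
    G.AltFourCycleFree ↔ ForbiddenIn (cycleGraph 4) G ∧ ForbiddenIn (cycleGraph 4)ᶜ G ∧
      ForbiddenIn (pathGraph 4) G := by
  refine ⟨fun hG => ⟨hG.forbiddenIn ?_, hG.forbiddenIn ?_, hG.forbiddenIn ?_⟩,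
    fun ⟨hC, hCc, hP⟩ => altFourCycleFree_of_forbiddenIn hC hCc hP⟩
  · exact fun h => h 0 1 3 2 (by unfold IsAltFourCycle; decide)
  · exact fun h => h 0 2 1 3 (by unfold IsAltFourCycle; decide)
  · exact fun h => h 1 0 2 3 (by simp [IsAltFourCycle, pathGraph_adj])

theorem altFourCycleFree_of_adj_iff_lt_add (w : V → ℤ) (t : ℤ)
    (h : ∀ u v, u ≠ v → (G.Adj u v ↔ t < w u + w v)) : G.AltFourCycleFree := by
  rintro u a v b ⟨hua, hvb, hub, hub', hva, hva'⟩
  have := (h u a hua.ne).1 hua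
  have := (h v b hvb.ne).1 hvb
  have := mt (h u b hub).2 hub'
  have := mt (h v a hva).2 hva'
  omega

theorem AltFourCycleFree.neighborSet_sdiff_subset_or (hG : G.AltFourCycleFree) (u z : V) :
    G.neighborSet u \ {z} ⊆ G.neighborSet z ∨ G.neighborSet z \ {u} ⊆ G.neighborSet u := by
  by_contra! ⟨h, h'⟩
  obtain ⟨a, ⟨hua, haz⟩, hza⟩ := Set.not_subset.1 h
  obtain ⟨b, ⟨hzb, hbu⟩, hub⟩ := Set.not_subset.1 h'
  exact hG u a z b ⟨hua, hzb, Ne.symm hbu, hub, Ne.symm haz, hza⟩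

theorem AltFourCycleFree.exists_isolated_or_dominating (hG : G.AltFourCycleFree)
    {U : Finset V} (hU : U.Nonempty) :
    ∃ v ∈ U, (∀ w ∈ U, ¬ G.Adj v w) ∨ (∀ w ∈ U, w ≠ v → G.Adj v w) := by
  classical
  obtain ⟨u, hu, hmin⟩ := U.exists_min_image (fun x => #{w ∈ U | G.Adj x w}) hU
  have key : ∀ a ∈ U, G.Adj u a → ∀ z ∈ U, z ≠ a → G.Adj z a := by
    intro a ha hua z hz hza
    by_contra hza'
    refine (hG.neighborSet_sdiff_subset_or u z).elim (fun h => hza' (h ⟨hua, hza.symm⟩))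
      fun h => ?_
    -- `swap u z` maps the neighbours of `z` in `U` into those of `u` other than `a`
    have hle : #{w ∈ U | G.Adj z w} ≤ #({w ∈ U | G.Adj u w}.erase a) := by
      refine card_le_card_of_injOn (Equiv.swap u z) (fun b hb => ?_) (Equiv.injective _).injOn
      simp only [coe_filter, Set.mem_ofPred_eq] at hb
      simp only [coe_erase, coe_filter, Set.mem_sdiff, Set.mem_ofPred_eq, Set.mem_singleton_iff]
      rcases eq_or_ne b u with rfl | hbu
      · simp [hz, hb.2.symm, hza]
      · rw [Equiv.swap_apply_of_ne_of_ne hbu hb.2.ne']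
        exact ⟨⟨hb.1, h ⟨hb.2, hbu⟩⟩, by rintro rfl; exact hza' hb.2⟩
    exact (hmin z hz).not_gt (hle.trans_lt (card_erase_lt_of_mem (by simp [ha, hua])))
  by_cases hiso : ∃ a ∈ U, G.Adj u a
  · obtain ⟨a, ha, hua⟩ := hiso
    exact ⟨a, ha, .inr fun z hz hza => (key a ha hua z hz hza).symm⟩
  · push Not at hiso
    exact ⟨u, hu, .inl hiso⟩

variable {U K : Set V} {n : ℕ} {lvl : V → ℕ}

/-- The threshold structure of `G` on `U` recorded by levels: a vertex of level `i` lies in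
`X_{i+1}` if it is in `K` and in `A_i` otherwise. -/
structure ThresholdLevels (G : SimpleGraph V) (U : Set V) (n : ℕ) (K : Set V) (lvl : V → ℕ) :
    Prop where
  adj_iff : ∀ u ∈ U, ∀ v ∈ U, G.Adj u v ↔
    u ≠ v ∧ (u ∈ K ∧ v ∈ K ∨ u ∈ K ∧ lvl u < lvl v ∨ v ∈ K ∧ lvl v < lvl u)
  le : ∀ u ∈ U, lvl u ≤ n
  exists_mem : ∀ i < n, ∃ x ∈ U, x ∈ K ∧ lvl x = i
  exists_notMem : ∀ i, 0 < i → i ≤ n → ∃ s ∈ U, s ∉ K ∧ lvl s = i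

theorem adj_levels_iff_exists_fin {u v : V} (hu : lvl u ≤ n) (hv : lvl v ≤ n) :
    u ≠ v ∧ (u ∈ K ∧ v ∈ K ∨ u ∈ K ∧ lvl u < lvl v ∨ v ∈ K ∧ lvl v < lvl u) ↔
      u ∈ K ∧ v ∈ K ∧ u ≠ v ∨
        ∃ i j : Fin (n + 1), (j : ℕ) < i ∧
          ((u ∉ K ∧ lvl u = i) ∧ v ∈ K ∧ lvl v = j ∨ (v ∉ K ∧ lvl v = i) ∧ u ∈ K ∧ lvl u = j) := by
  constructor
  · rintro ⟨huv, ⟨huK, hvK⟩ | ⟨huK, hlt⟩ | ⟨hvK, hlt⟩⟩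
    · exact .inl ⟨huK, hvK, huv⟩
    · by_cases hvK : v ∈ K
      · exact .inl ⟨huK, hvK, huv⟩
      · exact .inr ⟨⟨lvl v, by omega⟩, ⟨lvl u, by omega⟩, hlt, .inr ⟨⟨hvK, rfl⟩, huK, rfl⟩⟩
    · by_cases huK : u ∈ K
      · exact .inl ⟨huK, hvK, huv⟩
      · exact .inr ⟨⟨lvl u, by omega⟩, ⟨lvl v, by omega⟩, hlt, .inl ⟨⟨huK, rfl⟩, hvK, rfl⟩⟩
  · rintro (⟨huK, hvK, huv⟩ | ⟨i, j, hij, ⟨⟨huK, hi⟩, hvK, hj⟩ | ⟨⟨hvK, hi⟩, huK, hj⟩⟩)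
    · exact ⟨huv, .inl ⟨huK, hvK⟩⟩
    · exact ⟨by rintro rfl; exact huK hvK, .inr (.inr ⟨hvK, by omega⟩)⟩
    · exact ⟨by rintro rfl; exact hvK huK, .inr (.inl ⟨huK, by omega⟩)⟩

theorem _root_.IsSKThreshold.exists_thresholdLevels {S : Set V} (h : IsSKThreshold G S K) :
    ∃ n lvl, G.ThresholdLevels Set.univ n K lvl := by
  obtain ⟨n, X, A, hXX, hAA, hXA, rfl, rfl, hcov, hXne, hAne, hadj⟩ := h
  have eq_of_mem {Y : Fin (n + 1) → Set V} (hY : ∀ i j, i ≠ j → Disjoint (Y i) (Y j)) {v : V}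
      {i j : Fin (n + 1)} (hi : v ∈ Y i) (hj : v ∈ Y j) : i = j :=
    by_contra fun hne => Set.disjoint_left.1 (hY _ _ hne) hi hj
  have hidx (v : V) : ∃ i, v ∈ X i ∨ v ∈ A i := by
    rcases hcov v with hv | hv <;> obtain ⟨i, hi⟩ := Set.mem_iUnion.1 hv
    exacts [⟨i, .inr hi⟩, ⟨i, .inl hi⟩]
  choose idx hidx using hidx
  have hX (v : V) (i : Fin (n + 1)) : v ∈ X i ↔ v ∈ ⋃ j, X j ∧ (idx v : ℕ) = i := by
    refine ⟨fun hi => ⟨Set.mem_iUnion.2 ⟨i, hi⟩, ?_⟩, fun ⟨hv, hi⟩ => ?_⟩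
    · rcases hidx v with hv | hv
      · rw [eq_of_mem hXX hv hi]
      · exact (Set.disjoint_left.1 (hXA i _) hi hv).elim
    · obtain ⟨j, hj⟩ := Set.mem_iUnion.1 hv
      rcases Fin.ext hi ▸ hidx v with hv | hv
      · exact hv
      · exact (Set.disjoint_left.1 (hXA j _) hj hv).elim
  have hA (v : V) (i : Fin (n + 1)) : v ∈ A i ↔ v ∉ ⋃ j, X j ∧ (idx v : ℕ) = i := by
    refine ⟨fun hi => ⟨fun hv => ?_, ?_⟩, fun ⟨hv, hi⟩ => ?_⟩
    · obtain ⟨j, hj⟩ := Set.mem_iUnion.1 hv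
      exact Set.disjoint_left.1 (hXA j i) hj hi
    · rcases hidx v with hv | hv
      · exact (Set.disjoint_left.1 (hXA _ i) hv hi).elim
      · rw [eq_of_mem hAA hv hi]
    · rcases Fin.ext hi ▸ hidx v with hv' | hv'
      · exact (hv (Set.mem_iUnion.2 ⟨i, hv'⟩)).elim
      · exact hv'
  refine ⟨n, fun v => idx v, ⟨fun u _ v _ => ?_, fun v _ => Nat.le_of_lt_succ (idx v).2,
    fun i hi => ?_, fun i hi hin => ?_⟩⟩
  · rw [hadj]
    simp only [hX, hA]
    exact (adj_levels_iff_exists_fin (lvl := fun w => idx w) (Nat.le_of_lt_succ (idx u).2)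
      (Nat.le_of_lt_succ (idx v).2)).symm
  · obtain ⟨x, hx⟩ := hXne ⟨i, by omega⟩ hi
    exact ⟨x, trivial, (hX x _).1 hx⟩
  · obtain ⟨x, hx⟩ := hAne ⟨i, by omega⟩ hi
    exact ⟨x, trivial, (hA x _).1 hx⟩

namespace ThresholdLevels

theorem isSKThreshold (h : G.ThresholdLevels Set.univ n K lvl) : IsSKThreshold G Kᶜ K := by
  have hle (v : V) : lvl v < n + 1 := Nat.lt_succ_of_le (h.le v trivial)
  refine ⟨n, fun i => {x | x ∈ K ∧ lvl x = i}, fun i => {s | s ∉ K ∧ lvl s = i},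
    fun i j hij => ?_, fun i j hij => ?_, fun i j => ?_, ?_, ?_, fun v => em' _, fun i hi => ?_,
    fun i hi => ?_, fun u v => ?_⟩
  · exact Set.disjoint_left.2 fun x hi hj => hij (Fin.ext (hi.2.symm.trans hj.2))
  · exact Set.disjoint_left.2 fun x hi hj => hij (Fin.ext (hi.2.symm.trans hj.2))
  · exact Set.disjoint_left.2 fun x hi hj => hj.1 hi.1
  · ext x; simpa using fun hx => ⟨⟨lvl x, hle x⟩, rfl⟩
  · ext x; simpa using fun hx => ⟨⟨lvl x, hle x⟩, rfl⟩
  · obtain ⟨x, -, hx⟩ := h.exists_mem i hi; exact ⟨x, hx⟩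
  · obtain ⟨x, -, hx⟩ := h.exists_notMem i hi (Nat.le_of_lt_succ i.2); exact ⟨x, hx⟩
  · rw [h.adj_iff u trivial v trivial]
    exact adj_levels_iff_exists_fin (h.le u trivial) (h.le v trivial)

theorem altFourCycleFree (h : G.ThresholdLevels Set.univ n K lvl) : G.AltFourCycleFree := by
  classical
  -- as `lvl ≤ n`, two vertices of `K` always exceed the threshold and two outside `K` never do
  refine altFourCycleFree_of_adj_iff_lt_add
    (fun x => if x ∈ K then 2 * n + 1 - lvl x else lvl x) (2 * n + 1) fun u v huv => ?_
  have := h.le u trivial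
  have := h.le v trivial
  rw [h.adj_iff u trivial v trivial]
  by_cases hu : u ∈ K <;> by_cases hv : v ∈ K <;> simp [hu, hv, huv] <;> omega

variable [DecidableEq V] {v : V}

theorem insert_isolated (h : G.ThresholdLevels U n K lvl) (hvU : v ∉ U)
    (hv : ∀ w ∈ U, ¬ G.Adj v w) :
    G.ThresholdLevels (insert v U) n (K \ {v}) (Function.update lvl v 0) where
  adj_iff := by
    rintro u (rfl | hu) w (rfl | hw)
    · simp
    · have hwu : w ≠ u := ne_of_mem_of_not_mem hw hvU
      simp [hv w hw, hwu]
    · have huw : u ≠ w := ne_of_mem_of_not_mem hu hvU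
      simp [G.adj_comm u, hv u hu, huw]
    · have : u ≠ v := ne_of_mem_of_not_mem hu hvU
      have : w ≠ v := ne_of_mem_of_not_mem hw hvU
      simp [h.adj_iff u hu w hw, *]
  le := by
    rintro u (rfl | hu)
    · simp
    · simpa [ne_of_mem_of_not_mem hu hvU] using h.le u hu
  exists_mem i hi := by
    obtain ⟨x, hx, hxK, rfl⟩ := h.exists_mem i hi
    exact ⟨x, .inr hx, by simp [hxK, ne_of_mem_of_not_mem hx hvU]⟩
  exists_notMem i hi hin := by
    obtain ⟨x, hx, hxK, rfl⟩ := h.exists_notMem i hi hin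
    exact ⟨x, .inr hx, by simp [hxK, ne_of_mem_of_not_mem hx hvU]⟩

theorem insert_dominating_of_pos (h : G.ThresholdLevels U n K lvl) (hvU : v ∉ U)
    (hv : ∀ w ∈ U, G.Adj v w) (hpos : ∀ s ∈ U, s ∉ K → 0 < lvl s) :
    G.ThresholdLevels (insert v U) n (insert v K) (Function.update lvl v 0) where
  adj_iff := by
    rintro u (rfl | hu) w (rfl | hw)
    · simp
    · have hwu : w ≠ u := ne_of_mem_of_not_mem hw hvU
      simpa [hv w hw, hwu, hwu.symm] using (em (w ∈ K)).imp_right (hpos w hw)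
    · have huw : u ≠ w := ne_of_mem_of_not_mem hu hvU
      simpa [(hv u hu).symm, huw] using (em (u ∈ K)).imp_right (hpos u hu)
    · have : u ≠ v := ne_of_mem_of_not_mem hu hvU
      have : w ≠ v := ne_of_mem_of_not_mem hw hvU
      simp [h.adj_iff u hu w hw, *]
  le := by
    rintro u (rfl | hu)
    · simp
    · simpa [ne_of_mem_of_not_mem hu hvU] using h.le u hu
  exists_mem i hi := by
    obtain ⟨x, hx, hxK, rfl⟩ := h.exists_mem i hi
    exact ⟨x, .inr hx, by simp [hxK, ne_of_mem_of_not_mem hx hvU]⟩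
  exists_notMem i hi hin := by
    obtain ⟨x, hx, hxK, rfl⟩ := h.exists_notMem i hi hin
    exact ⟨x, .inr hx, by simp [hxK, ne_of_mem_of_not_mem hx hvU]⟩

theorem insert_dominating_of_exists (h : G.ThresholdLevels U n K lvl) (hvU : v ∉ U)
    (hv : ∀ w ∈ U, G.Adj v w) (h0 : ∃ s ∈ U, s ∉ K ∧ lvl s = 0) :
    G.ThresholdLevels (insert v U) (n + 1) (insert v K) (Function.update (lvl · + 1) v 0) where
  adj_iff := by
    rintro u (rfl | hu) w (rfl | hw)
    · simp
    · have hwu : w ≠ u := ne_of_mem_of_not_mem hw hvU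
      simp [hv w hw, hwu, hwu.symm]
    · have huw : u ≠ w := ne_of_mem_of_not_mem hu hvU
      simp [(hv u hu).symm, huw]
    · have : u ≠ v := ne_of_mem_of_not_mem hu hvU
      have : w ≠ v := ne_of_mem_of_not_mem hw hvU
      simp [h.adj_iff u hu w hw, *]
  le := by
    rintro u (rfl | hu)
    · simp
    · simpa [ne_of_mem_of_not_mem hu hvU] using h.le u hu
  exists_mem i hi := by
    rcases i with _ | i
    · exact ⟨v, .inl rfl, by simp⟩
    · obtain ⟨x, hx, hxK, rfl⟩ := h.exists_mem i (by omega)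
      exact ⟨x, .inr hx, by simp [hxK, ne_of_mem_of_not_mem hx hvU]⟩
  exists_notMem i hi hin := by
    obtain ⟨i, rfl⟩ := Nat.exists_eq_add_one_of_ne_zero hi.ne'
    obtain ⟨x, hx, hxK, hxi⟩ := i.eq_zero_or_pos.elim (fun hi0 => hi0 ▸ h0)
      (fun hi => h.exists_notMem i hi (by omega))
    exact ⟨x, .inr hx, by simp [hxK, hxi, ne_of_mem_of_not_mem hx hvU]⟩

theorem insert_dominating (h : G.ThresholdLevels U n K lvl) (hvU : v ∉ U)
    (hv : ∀ w ∈ U, G.Adj v w) :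
    ∃ n' lvl', G.ThresholdLevels (insert v U) n' (insert v K) lvl' := by
  by_cases h0 : ∃ s ∈ U, s ∉ K ∧ lvl s = 0
  · exact ⟨_, _, h.insert_dominating_of_exists hvU hv h0⟩
  · push Not at h0
    exact ⟨_, _, h.insert_dominating_of_pos hvU hv fun s hs hsK => Nat.pos_of_ne_zero (h0 s hs hsK)⟩

end ThresholdLevels

theorem AltFourCycleFree.exists_thresholdLevels [DecidableEq V] (hG : G.AltFourCycleFree)
    (U : Finset V) : ∃ n K lvl, G.ThresholdLevels U n K lvl := by
  induction U using Finset.strongInduction with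
  | H U ih =>
    rcases U.eq_empty_or_nonempty with rfl | hU
    · exact ⟨0, ∅, 0, ⟨by simp, by simp, by simp, by simp +contextual [Nat.pos_iff_ne_zero]⟩⟩
    obtain ⟨v, hv, hiso | hdom⟩ := hG.exists_isolated_or_dominating hU <;>
      obtain ⟨n, K, lvl, h⟩ := ih (U.erase v) (erase_ssubset hv) <;>
      rw [← insert_erase hv, coe_insert]
    · exact ⟨n, _, _, h.insert_isolated (by simp) fun w hw => hiso w (mem_of_mem_erase hw)⟩
    · obtain ⟨n', lvl', h'⟩ := h.insert_dominating (by simp)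
        fun w hw => hdom w (mem_of_mem_erase hw) (ne_of_mem_erase hw)
      exact ⟨n', _, lvl', h'⟩

end SimpleGraph

/-- Hammer–Chvátal. -/
theorem stmt_5 {V : Type u} [Fintype V] (G : SimpleGraph V) :
    (∃ S K : Set V, IsSKThreshold G S K) ↔
      ForbiddenIn (cycleGraph 4) G ∧ ForbiddenIn (cycleGraph 4)ᶜ G ∧
        ForbiddenIn (pathGraph 4) G := by
  classical
  rw [← G.altFourCycleFree_iff_forbiddenIn]
  constructor
  · rintro ⟨S, K, h⟩
    obtain ⟨n, lvl, hlvl⟩ := h.exists_thresholdLevels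
    exact hlvl.altFourCycleFree
  · intro hG
    obtain ⟨n, K, lvl, hlvl⟩ := hG.exists_thresholdLevels Finset.univ
    rw [Finset.coe_univ] at hlvl
    exact ⟨_, K, hlvl.isSKThreshold⟩
end

section
/- If G is an {S,K}-split graph in which P_4 is a forbidden induced subgraph, then G is an {S,K}-threshold graph, i.e., G admits a threshold structure with clique part exactly K and stable part exactly S. -/
open SimpleGraph

universe u

/-! The neighbourhoods of the stable vertices form a chain under inclusion: if `b ∈ N(s) \ N(t)`
and `b' ∈ N(t) \ N(s)`, then `s b b' t` is an induced `P₄`. Rank a stable vertex `s` by the number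
of nonempty stable neighbourhoods contained in `N(s)`, and a clique vertex `v` by the number of
those missing `v`; along the chain, `s` and `v` are adjacent exactly when the rank of `v` is below
that of `s`, and the fibres of the two rank functions are the sets `A_i` and `X_j`. -/

open Finset

section ChainRank

variable {α : Type*} [PartialOrder α] [DecidableLE α] {D : Finset α}

theorem card_filter_le_lt_card_filter_le {a a' : α} (ha' : a' ∈ D) (h : a < a') :
    #{b ∈ D | b ≤ a} < #{b ∈ D | b ≤ a'} :=
  card_lt_card <| (ssubset_iff_of_subset fun b hb => by
      simp only [mem_filter] at hb ⊢; exact ⟨hb.1, hb.2.trans h.le⟩).2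
    ⟨a', by simp [ha'], by simp [h.not_ge]⟩

theorem IsChain.image_card_filter_le_eq_Icc (hD : IsChain (· ≤ ·) (D : Set α)) :
    D.image (fun a => #{b ∈ D | b ≤ a}) = Icc 1 #D := by
  have hsub : D.image (fun a => #{b ∈ D | b ≤ a}) ⊆ Icc 1 #D := by
    rintro _ hk
    obtain ⟨a, ha, rfl⟩ := mem_image.1 hk
    exact mem_Icc.2 ⟨card_pos.2 ⟨a, mem_filter.2 ⟨ha, le_rfl⟩⟩, card_filter_le _ _⟩
  have hinj : Set.InjOn (fun a => #{b ∈ D | b ≤ a}) D := by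
    intro a ha a' ha' h
    by_contra hne
    rcases hD.total ha ha' with hle | hle
    · exact (card_filter_le_lt_card_filter_le ha' (hle.lt_of_ne hne)).ne h
    · exact (card_filter_le_lt_card_filter_le ha (hle.lt_of_ne (Ne.symm hne))).ne' h
  refine eq_of_subset_of_card_le hsub ?_
  rw [Nat.card_Icc, card_image_of_injOn hinj]
  omega

end ChainRank

section NestedFinsets

variable {V : Type*} [DecidableEq V] {D : Finset (Finset V)}

theorem card_filter_notMem_lt_card_filter_subset (hD : IsChain (· ⊆ ·) (D : Set (Finset V)))
    {N : Finset V} (hN : N ∈ D) {x : V} (hx : x ∈ N) :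
    #{M ∈ D | x ∉ M} < #{M ∈ D | M ⊆ N} := by
  refine card_lt_card ((ssubset_iff_of_subset fun M hM => ?_).2 ⟨N, by simp [hN], by simp [hx]⟩)
  obtain ⟨hMD, hxM⟩ := mem_filter.1 hM
  exact mem_filter.2 ⟨hMD, (hD.total hMD hN).resolve_right fun hNM => hxM (hNM hx)⟩

theorem exists_card_filter_notMem_eq (hD : IsChain (· ⊆ ·) (D : Set (Finset V)))
    (hne : ∀ N ∈ D, N.Nonempty) {j : ℕ} (hj : j < #D) :
    ∃ N ∈ D, ∃ x ∈ N, #{M ∈ D | x ∉ M} = j := by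
  obtain ⟨N, hN, hrank⟩ : ∃ N ∈ D, #{M ∈ D | M ≤ N} = j + 1 :=
    mem_image.1 (hD.image_card_filter_le_eq_Icc ▸ mem_Icc.2 ⟨by omega, hj⟩)
  set P := ({M ∈ D | M ⊆ N} : Finset _).erase N
  have hP : #P = j := by
    rw [card_erase_of_mem (by simp [hN])]
    exact Nat.sub_eq_of_eq_add hrank
  -- a point of `N` outside the largest member of `D` strictly below `N`
  obtain ⟨x, hxN, hxP⟩ : ∃ x ∈ N, ∀ M ∈ P, x ∉ M := by
    rcases P.eq_empty_or_nonempty with hPe | hPne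
    · obtain ⟨x, hx⟩ := hne N hN
      exact ⟨x, hx, by simp [hPe]⟩
    obtain ⟨M₀, hM₀P, hM₀max⟩ := exists_maximal hPne
    obtain ⟨hM₀N, hM₀D, hM₀sub⟩ := by simpa [P] using hM₀P
    obtain ⟨x, hxN, hxM₀⟩ := not_subset.1 fun h => hM₀N (subset_antisymm hM₀sub h)
    refine ⟨x, hxN, fun M hMP hxM => hxM₀ ?_⟩
    rcases hD.total (mem_filter.1 (mem_of_mem_erase hMP)).1 hM₀D with hMM₀ | hM₀M
    · exact hMM₀ hxM
    · exact hM₀max hMP hM₀M hxM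
  refine ⟨N, hN, x, hxN, hP ▸ congrArg card (ext fun M => ?_)⟩
  simp only [P, mem_filter, mem_erase]
  constructor
  · rintro ⟨hMD, hxM⟩
    exact ⟨fun h => hxM (h ▸ hxN), hMD, (hD.total hMD hN).resolve_right fun hNM => hxM (hNM hxN)⟩
  · rintro ⟨hMN, hMD, hMsub⟩
    exact ⟨hMD, hxP M (by simp [P, hMN, hMD, hMsub])⟩

end NestedFinsets

section SplitGraph

variable {V : Type*} {G : SimpleGraph V} {S K : Set V}

theorem ForbiddenIn.not_isInducedP4 (h : ForbiddenIn (pathGraph 4) G) {a b b' a' : V} :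
    ¬ IsInducedP4 G a b b' a' := by
  rintro ⟨hab, hab', haa', hbb', hba', hb'a', h₁, h₂, h₃, h₄, h₅, h₆⟩
  refine h ⟨⟨![a, b, b', a'], fun u v huv => ?_⟩, fun u v => ?_⟩
  · fin_cases u <;> fin_cases v <;> simp_all [eq_comm]
  · change G.Adj (![a, b, b', a'] u) (![a, b, b', a'] v) ↔ _
    fin_cases u <;> fin_cases v <;>
      simp [pathGraph_adj, h₁, h₂, h₃, h₄, h₅, h₆, h₁.symm, h₂.symm, h₃.symm, G.adj_comm _ a,
        G.adj_comm _ b]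

theorem IsSplitPartition.mem_clique_of_adj_s6 (hsplit : IsSplitPartition G S K) {s v : V}
    (hs : s ∈ S) (h : G.Adj s v) : v ∈ K :=
  (hsplit.1 v).resolve_left fun hv => hsplit.2.2.1 s hs v hv h

theorem IsSplitPartition.neighborSet_subset_or_subset (hsplit : IsSplitPartition G S K)
    (hP4 : ForbiddenIn (pathGraph 4) G) {s t : V} (hs : s ∈ S) (ht : t ∈ S) :
    G.neighborSet s ⊆ G.neighborSet t ∨ G.neighborSet t ⊆ G.neighborSet s := by
  by_contra! hcon
  obtain ⟨⟨b, hsb, htb⟩, ⟨b', htb', hsb'⟩⟩ := And.imp Set.not_subset.1 Set.not_subset.1 hcon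
  simp only [mem_neighborSet] at hsb htb htb' hsb'
  have hst := hsplit.2.2.1 s hs t ht
  have hbb' := hsplit.2.2.2 b (hsplit.mem_clique_of_adj_s6 hs hsb) b'
    (hsplit.mem_clique_of_adj_s6 ht htb') (by rintro rfl; exact hsb' hsb)
  refine hP4.not_isInducedP4 (a := s) (b := b) (b' := b') (a' := t)
    ⟨hsb.ne, by rintro rfl; exact hst htb'.symm, by rintro rfl; exact htb hsb, hbb'.ne,
      by rintro rfl; exact hst hsb, htb'.ne.symm, hsb, hbb', htb'.symm, hsb', hst,
      fun h => htb h.symm⟩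

theorem IsSplitPartition.isSKThreshold_of_rank (hsplit : IsSplitPartition G S K) (n : ℕ)
    (a x : V → ℕ) (ha : ∀ s ∈ S, a s ≤ n) (hx : ∀ v ∈ K, x v ≤ n)
    (hadj : ∀ s ∈ S, ∀ v ∈ K, G.Adj s v ↔ x v < a s)
    (ha_surj : ∀ i, 0 < i → i ≤ n → ∃ s ∈ S, a s = i)
    (hx_surj : ∀ j < n, ∃ v ∈ K, x v = j) : IsSKThreshold G S K := by
  obtain ⟨hcov, hdisj, hstab, hclq⟩ := hsplit
  set X : Fin (n + 1) → Set V := fun j => {v | v ∈ K ∧ x v = j}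
  set A : Fin (n + 1) → Set V := fun i => {s | s ∈ S ∧ a s = i}
  have hcross : ∀ s v, (∃ i j : Fin (n + 1), (j : ℕ) < i ∧ s ∈ A i ∧ v ∈ X j) ↔
      s ∈ S ∧ v ∈ K ∧ x v < a s := by
    refine fun s v => ⟨?_, fun ⟨hs, hv, hlt⟩ => ?_⟩
    · rintro ⟨i, j, hji, ⟨hs, hsi⟩, ⟨hv, hvj⟩⟩
      exact ⟨hs, hv, hsi ▸ hvj ▸ hji⟩
    · exact ⟨⟨a s, Nat.lt_succ_of_le (ha s hs)⟩, ⟨x v, Nat.lt_succ_of_le (hx v hv)⟩, hlt,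
        ⟨hs, rfl⟩, ⟨hv, rfl⟩⟩
  refine ⟨n, X, A, ?_, ?_, ?_, ?_, ?_, hcov, ?_, ?_, fun u v => ?_⟩
  · exact fun i j hij => Set.disjoint_left.2 fun v hi hj => hij (Fin.ext (hi.2.symm.trans hj.2))
  · exact fun i j hij => Set.disjoint_left.2 fun v hi hj => hij (Fin.ext (hi.2.symm.trans hj.2))
  · exact fun i j => Set.disjoint_left.2 fun v hv hv' => Set.disjoint_left.1 hdisj hv'.1 hv.1
  · ext v
    simp only [Set.mem_iUnion]
    exact ⟨fun hv => ⟨⟨x v, Nat.lt_succ_of_le (hx v hv)⟩, hv, rfl⟩, fun ⟨_, hv, _⟩ => hv⟩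
  · ext s
    simp only [Set.mem_iUnion]
    exact ⟨fun hs => ⟨⟨a s, Nat.lt_succ_of_le (ha s hs)⟩, hs, rfl⟩, fun ⟨_, hs, _⟩ => hs⟩
  · exact fun j hj => hx_surj j hj
  · exact fun i hi => ha_surj i hi (Nat.le_of_lt_succ i.isLt)
  · simp only [and_or_left, exists_or, hcross]
    have hSK := Set.disjoint_left.1 hdisj
    rcases hcov u with hu | hu <;> rcases hcov v with hv | hv
    · simp [hstab u hu v hv, hSK hu, hSK hv]
    · simp [hadj u hu v hv, hu, hv, hSK hu]
    · simpa [hu, hv, hSK hv, G.adj_comm u] using hadj v hv u hu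
    · have hu' : u ∉ S := fun h => hSK h hu
      have hv' : v ∉ S := fun h => hSK h hv
      simp only [hu, hv, hu', hv', true_and, false_and, or_false]
      exact ⟨Adj.ne, hclq u hu v hv⟩

end SplitGraph

section StableNeighbourhoods

variable {V : Type*} [Fintype V] [DecidableEq V] (G : SimpleGraph V) [DecidableRel G.Adj]
  (S : Set V) [DecidablePred (· ∈ S)]

def stableNbhds : Finset (Finset V) :=
  (({s | s ∈ S} : Finset V).image (G.neighborFinset ·)).erase ∅

def stableRank (s : V) : ℕ := #{N ∈ stableNbhds G S | N ⊆ G.neighborFinset s}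

def cliqueRank (v : V) : ℕ := #{N ∈ stableNbhds G S | v ∉ N}

variable {G S}

theorem mem_stableNbhds {N : Finset V} :
    N ∈ stableNbhds G S ↔ N.Nonempty ∧ ∃ s ∈ S, G.neighborFinset s = N := by
  simp [stableNbhds, nonempty_iff_ne_empty]

theorem IsSplitPartition.isChain_stableNbhds {K : Set V} (hsplit : IsSplitPartition G S K)
    (hP4 : ForbiddenIn (pathGraph 4) G) : IsChain (· ⊆ ·) (stableNbhds G S : Set (Finset V)) := by
  rintro _ hN _ hM -
  obtain ⟨-, s, hs, rfl⟩ := mem_stableNbhds.1 hN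
  obtain ⟨-, t, ht, rfl⟩ := mem_stableNbhds.1 hM
  simpa only [← coe_subset, coe_neighborFinset] using hsplit.neighborSet_subset_or_subset hP4 hs ht

theorem adj_iff_cliqueRank_lt_stableRank (hD : IsChain (· ⊆ ·) (stableNbhds G S : Set (Finset V)))
    {s : V} (hs : s ∈ S) (v : V) : G.Adj s v ↔ cliqueRank G S v < stableRank G S s := by
  refine ⟨fun h => card_filter_notMem_lt_card_filter_subset hD
    (mem_stableNbhds.2 ⟨⟨v, by simpa⟩, s, hs, rfl⟩) (by simpa), fun hlt => ?_⟩
  by_contra h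
  refine hlt.not_ge (card_le_card fun N hN => ?_)
  obtain ⟨hND, hNs⟩ := mem_filter.1 hN
  exact mem_filter.2 ⟨hND, fun hv => h (by simpa using hNs hv)⟩

end StableNeighbourhoods

theorem stmt_6 {V : Type u} [Fintype V] (G : SimpleGraph V) (S K : Set V)
    (hsplit : IsSplitPartition G S K) (hP4 : ForbiddenIn (pathGraph 4) G) :
    IsSKThreshold G S K := by
  classical
  have hD := hsplit.isChain_stableNbhds hP4
  refine hsplit.isSKThreshold_of_rank #(stableNbhds G S) (stableRank G S) (cliqueRank G S)
    (fun _ _ => card_filter_le _ _) (fun _ _ => card_filter_le _ _)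
    (fun s hs v _ => adj_iff_cliqueRank_lt_stableRank hD hs v) (fun i hi hin => ?_)
    (fun j hj => ?_)
  · obtain ⟨N, hN, hrank⟩ :=
      mem_image.1 (hD.image_card_filter_le_eq_Icc ▸ mem_Icc.2 ⟨hi, hin⟩)
    obtain ⟨-, s, hs, rfl⟩ := mem_stableNbhds.1 hN
    exact ⟨s, hs, hrank⟩
  · obtain ⟨N, hN, v, hv, hrank⟩ :=
      exists_card_filter_notMem_eq hD (fun N hN => (mem_stableNbhds.1 hN).1) hj
    obtain ⟨-, s, hs, rfl⟩ := mem_stableNbhds.1 hN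
    exact ⟨v, hsplit.mem_clique_of_adj_s6 hs (by simpa using hv), hrank⟩
end

section
/- In a split graph G with stable set S and clique K in which the chair is forbidden as an induced subgraph, if mbb'm' is an induced P_4 with m,m' in S and b,b' in K, then every vertex of S adjacent to b other than m is adjacent to b'. -/
open SimpleGraph

universe u

theorem stmt_16 {V : Type u} [Fintype V] (G : SimpleGraph V) (S K : Set V)
    (hsplit : IsSplitPartition G S K) (hchair : ForbiddenIn chair G)
    (m b b' m' : V) (hP : IsInducedP4 G m b b' m')
    (hm : m ∈ S) (hm' : m' ∈ S) (hb : b ∈ K) (hb' : b' ∈ K) :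
    ∀ s ∈ S, s ≠ m → G.Adj s b → G.Adj s b' := by
  intro s hs hsm hsb
  by_contra hsb'
  obtain ⟨hSK, hdisj, hstab, hcliq⟩ := hsplit
  obtain ⟨h1, h2, h3, h4, h5, h6, hmb, hbb', hb'm', hmb', hmm', hbm'⟩ := hP
  have hsK : s ∉ K := fun h => (hdisj.ne_of_mem hs h) rfl
  have hsb1 : s ≠ b := fun h => hsK (h ▸ hb)
  have hsb2 : s ≠ b' := fun h => hsK (h ▸ hb')
  have hsm' : s ≠ m' := fun h => hbm' (h ▸ hsb).symm
  have hm'b : m' ≠ b := h5.symm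
  have hms : ¬ G.Adj m s := hstab m hm s hs
  have hm's : ¬ G.Adj m' s := hstab m' hm' s hs
  have hm'm : ¬ G.Adj m' m := fun h => hmm' h.symm
  apply hchair
  -- f : 0 ↦ m', 1 ↦ b', 2 ↦ b, 3 ↦ m, 4 ↦ s
  refine ⟨⟨![m', b', b, m, s], ?_⟩, ?_⟩
  · intro u v huv
    fin_cases u <;> fin_cases v <;>
      simp_all [Matrix.cons_val_zero, Matrix.cons_val_one] <;>
      first
      | rfl
      | (exfalso; first
          | exact h1 huv | exact h1 huv.symm
          | exact h2 huv | exact h2 huv.symm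
          | exact h3 huv | exact h3 huv.symm
          | exact h4 huv | exact h4 huv.symm
          | exact h5 huv | exact h5 huv.symm
          | exact h6 huv | exact h6 huv.symm
          | exact hsm huv | exact hsm huv.symm
          | exact hsb1 huv | exact hsb1 huv.symm
          | exact hsb2 huv | exact hsb2 huv.symm
          | exact hsm' huv | exact hsm' huv.symm)
  · intro u v
    fin_cases u <;> fin_cases v <;>
      simp [chair, Matrix.cons_val_zero, Matrix.cons_val_one,
        SimpleGraph.fromRel_adj] <;>
      first
      | exact G.loopless _
      | exact hb'm'.symm | exact hb'm' | exact hbb' | exact hbb'.symm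
      | exact hmb | exact hmb.symm | exact hsb | exact hsb.symm
      | exact hmb' | exact fun h => hmb' h.symm
      | exact hmm' | exact fun h => hmm' h.symm
      | exact hbm' | exact fun h => hbm' h.symm
      | exact hms | exact fun h => hms h.symm
      | exact hm's | exact fun h => hm's h.symm
      | exact hsb' | exact fun h => hsb' h.symm
      | exact hstab m hm m' hm' | exact hstab m' hm' m hm
      | exact hstab s hs m hm | exact hstab m hm s hs
end
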